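/- arXiv:1708.04109 — 8 statements merged into one kernel-verified Lean document; each statement's English description precedes it below -/
import Mathlib

section
/- Let I be a typed instance of the stable roommates problem with ties and incomplete lists, in which each agent belongs to one of k types, agents of the same type have identical preference lists, and all agents are indifferent between agents of the same type. A matching M (in which every agent is matched, possibly to a dummy) is stable if and only if (1) there is no pair of distinct types (i,j) such that type i strictly prefers type j to worst_M(i) and type j strictly prefers type i to worst_M(j), and (2) there is no type i with at least two agents such that type i strictly prefers type i to secondworst_M(i); here worst_M(i) is the type of the least desirable partner assigned to any agent of type i and secondworst_M(i) is the type of the second least desirable partner assigned to any agent of type i. -/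
/-- In a typed instance of SRTI (agents partitioned into `k` types,
type-level preferences given by `rank` — smaller is better, `k` is the dummy type),
a matching `M` (an involution; `M a = a` means matched to a dummy) is stable iff
(1) no pair of distinct types mutually prefer each other to their worst partners, and
(2) no type `i` with at least two agents prefers itself to its second-worst partner. -/
theorem typed_srti_stability_characterisation
    {Agent : Type} [Fintype Agent] [DecidableEq Agent]
    (k : ℕ) (typeOf : Agent → ℕ)
    (htype : ∀ a, typeOf a < k)
    (rank : ℕ → ℕ → ℕ)
    (M : Agent → Agent) (hinv : ∀ a, M (M a) = a)
    (ptype : Agent → ℕ)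
    (hptype : ∀ a, ptype a = if M a = a then k else typeOf (M a))
    (haccept : ∀ a, rank (typeOf a) (ptype a) ≤ rank (typeOf a) k)
    (worst secondworst : ℕ → ℕ)
    (hworst : ∀ i < k, (∃ a, typeOf a = i ∧ ptype a = worst i) ∧
        ∀ a, typeOf a = i → rank i (ptype a) ≤ rank i (worst i))
    (hsecond : ∀ i < k, (∃ a b : Agent, a ≠ b ∧ typeOf a = i ∧ typeOf b = i) →
        ∃ a, typeOf a = i ∧ ptype a = worst i ∧
          (∃ b, b ≠ a ∧ typeOf b = i ∧ ptype b = secondworst i) ∧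
          rank i (secondworst i) ≤ rank i (worst i) ∧
          ∀ c, typeOf c = i → c ≠ a → rank i (ptype c) ≤ rank i (secondworst i)) :
    (¬ ∃ a b : Agent, a ≠ b ∧ M a ≠ b ∧
        rank (typeOf a) (typeOf b) < rank (typeOf a) (ptype a) ∧
        rank (typeOf b) (typeOf a) < rank (typeOf b) (ptype b)) ↔
    ((¬ ∃ i j, i < k ∧ j < k ∧ i ≠ j ∧
        rank i j < rank i (worst i) ∧ rank j i < rank j (worst j)) ∧
     (¬ ∃ i, i < k ∧ (∃ a b : Agent, a ≠ b ∧ typeOf a = i ∧ typeOf b = i) ∧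
        rank i i < rank i (secondworst i))) := by
  constructor
  · intro hnb
    constructor
    · rintro ⟨i, j, hi, hj, hij, hri, hrj⟩
      obtain ⟨⟨a, hai, hpa⟩, -⟩ := hworst i hi
      obtain ⟨⟨b, hbj, hpb⟩, -⟩ := hworst j hj
      have hab : a ≠ b := fun h => hij (by rw [← hai, ← hbj, h])
      apply hnb
      refine ⟨a, b, hab, ?_, ?_, ?_⟩
      · intro hMab
        have hMa : M a ≠ a := by rw [hMab]; exact fun h => hab h.symm
        have hpj : ptype a = j := by rw [hptype a, if_neg hMa, hMab, hbj]
        rw [← hpa, hpj] at hri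
        exact lt_irrefl _ hri
      · rw [hai, hbj, hpa]; exact hri
      · rw [hbj, hai, hpb]; exact hrj
    · rintro ⟨i, hi, htwo, hr⟩
      obtain ⟨a, hai, hpa, ⟨b, hba, hbi, hpb⟩, hle, -⟩ := hsecond i hi htwo
      apply hnb
      refine ⟨a, b, fun h => hba h.symm, ?_, ?_, ?_⟩
      · intro hMab
        have hMa : M a ≠ a := by rw [hMab]; exact hba
        have hpi : ptype a = i := by rw [hptype a, if_neg hMa, hMab, hbi]
        have := hr.trans_le hle
        rw [← hpa, hpi] at this
        exact lt_irrefl _ this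
      · rw [hai, hbi, hpa]; exact hr.trans_le hle
      · rw [hbi, hai, hpb]; exact hr
  · rintro ⟨h1, h2⟩ ⟨a, b, hab, hMab, hra, hrb⟩
    by_cases hij : typeOf a = typeOf b
    · apply h2
      refine ⟨typeOf a, htype a, ⟨a, b, hab, rfl, hij.symm⟩, ?_⟩
      obtain ⟨a₀, ha₀, hpa₀, -, -, hmax⟩ :=
        hsecond (typeOf a) (htype a) ⟨a, b, hab, rfl, hij.symm⟩
      by_cases h : a = a₀
      · have hb : b ≠ a₀ := fun hb => hab (h.trans hb.symm)
        rw [← hij] at hrb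
        exact hrb.trans_le (hmax b hij.symm hb)
      · rw [← hij] at hra
        exact hra.trans_le (hmax a rfl h)
    · apply h1
      refine ⟨typeOf a, typeOf b, htype a, htype b, hij, ?_, ?_⟩
      · exact hra.trans_le ((hworst _ (htype a)).2 a rfl)
      · exact hrb.trans_le ((hworst _ (htype b)).2 b rfl)
end

section
/- In a typed instance of SMTI (the bipartite restriction of typed SRTI), a matching M in which every agent is matched (possibly to a dummy) is stable if and only if there is no pair of types (i,j), with i a type of women and j a type of men, such that type i strictly prefers type j to worst_M(i) and type j strictly prefers type i to worst_M(j). -/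
/-- In a typed instance of SMTI (bipartite: `side` distinguishes women
(`true`) from men (`false`), types carry a side via `sideT`, `rank` gives the
type-level preferences, `k` is the dummy type), a matching `M` is stable iff there
is no pair of types `(i,j)` (a woman-type and a man-type) such that type `i`
strictly prefers `j` to `worst i` and type `j` strictly prefers `i` to `worst j`. -/
theorem typed_smti_stability_characterisation
    {Agent : Type} [Fintype Agent] [DecidableEq Agent]
    (k : ℕ) (typeOf : Agent → ℕ)
    (htype : ∀ a, typeOf a < k)
    (side : Agent → Bool) (sideT : ℕ → Bool)
    (hside : ∀ a, sideT (typeOf a) = side a)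
    (rank : ℕ → ℕ → ℕ)
    (M : Agent → Agent) (hinv : ∀ a, M (M a) = a)
    (hbip : ∀ a, M a ≠ a → side (M a) ≠ side a)
    (ptype : Agent → ℕ)
    (hptype : ∀ a, ptype a = if M a = a then k else typeOf (M a))
    (haccept : ∀ a, rank (typeOf a) (ptype a) ≤ rank (typeOf a) k)
    (worst : ℕ → ℕ)
    (hworst : ∀ i < k, (∃ a, typeOf a = i) →
        (∃ a, typeOf a = i ∧ ptype a = worst i) ∧
        ∀ a, typeOf a = i → rank i (ptype a) ≤ rank i (worst i)) :
    (¬ ∃ a b : Agent, side a ≠ side b ∧ M a ≠ b ∧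
        rank (typeOf a) (typeOf b) < rank (typeOf a) (ptype a) ∧
        rank (typeOf b) (typeOf a) < rank (typeOf b) (ptype b)) ↔
    (¬ ∃ i j, i < k ∧ j < k ∧ sideT i = true ∧ sideT j = false ∧
        (∃ a, typeOf a = i) ∧ (∃ b, typeOf b = j) ∧
        rank i j < rank i (worst i) ∧ rank j i < rank j (worst j)) := by
  constructor
  · intro h hT
    obtain ⟨i, j, hi, hj, hsi, hsj, hexa, hexb, hri, hrj⟩ := hT
    obtain ⟨⟨a, ha, hpa⟩, _⟩ := hworst i hi hexa
    obtain ⟨⟨b, hb, hpb⟩, _⟩ := hworst j hj hexb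
    have hsa : side a = true := by rw [← hside a, ha, hsi]
    have hsb : side b = false := by rw [← hside b, hb, hsj]
    refine h ⟨a, b, by simp [hsa, hsb], ?_, ?_, ?_⟩
    · intro hM
      have hMne : M a ≠ a := by
        rw [hM]; intro hba; rw [hba] at hsb; rw [hsa] at hsb; exact Bool.noConfusion hsb
      have : ptype a = j := by rw [hptype a, if_neg hMne, hM, hb]
      rw [hpa] at this
      rw [← this] at hri
      exact lt_irrefl _ hri
    · rw [ha, hb, hpa]; exact hri
    · rw [ha, hb, hpb]; exact hrj
  · intro h hA
    obtain ⟨a, b, hs, hM, hra, hrb⟩ := hA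
    apply h
    have key : ∀ c : Agent, rank (typeOf c) (ptype c) ≤ rank (typeOf c) (worst (typeOf c)) :=
      fun c => (hworst (typeOf c) (htype c) ⟨c, rfl⟩).2 c rfl
    cases hsa : side a with
    | true =>
      have hsb : side b = false := by
        cases hb' : side b with
        | true => rw [hsa, hb'] at hs; exact absurd rfl hs
        | false => rfl
      exact ⟨typeOf a, typeOf b, htype a, htype b, by rw [hside a, hsa],
        by rw [hside b, hsb], ⟨a, rfl⟩, ⟨b, rfl⟩,
        lt_of_lt_of_le hra (key a), lt_of_lt_of_le hrb (key b)⟩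
    | false =>
      have hsb : side b = true := by
        cases hb' : side b with
        | true => rfl
        | false => rw [hsa, hb'] at hs; exact absurd rfl hs
      exact ⟨typeOf b, typeOf a, htype b, htype a, by rw [hside b, hsb],
        by rw [hside a, hsa], ⟨b, rfl⟩, ⟨a, rfl⟩,
        lt_of_lt_of_le hrb (key b), lt_of_lt_of_le hra (key a)⟩
end

section
/- In a typed instance of SMTI, for any matching M (with unmatched agents treated as matched to the dummy type k+1), the number of blocking pairs (x,y) such that x is a woman of type i and y a man of type j equals the product of (the number of men of type j matched to agents of types strictly less preferred by j than type i) and (the number of women of type i matched to agents of types strictly less preferred by i than type j). -/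
/-- In a typed instance of SMTI, for any matching `M` (unmatched agents
treated as matched to the dummy type `k`), the number of blocking pairs `(x,y)` with
`x` a woman of type `i` and `y` a man of type `j` equals the number of men of type
`j` matched to a type strictly less preferred (by `j`) than `i`, times the number of
women of type `i` matched to a type strictly less preferred (by `i`) than `j`. -/
theorem typed_smti_blocking_pair_count
    {Agent : Type} [Fintype Agent] [DecidableEq Agent]
    (k : ℕ) (typeOf : Agent → ℕ) (htype : ∀ a, typeOf a < k)
    (side : Agent → Bool)
    (rank : ℕ → ℕ → ℕ)
    (M : Agent → Agent) (hinv : ∀ a, M (M a) = a)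
    (hbip : ∀ a, M a ≠ a → side (M a) ≠ side a)
    (ptype : Agent → ℕ)
    (hptype : ∀ a, ptype a = if M a = a then k else typeOf (M a))
    (haccept : ∀ a, rank (typeOf a) (ptype a) ≤ rank (typeOf a) k)
    (i j : ℕ) :
    (Finset.univ.filter fun p : Agent × Agent =>
        side p.1 = true ∧ side p.2 = false ∧
        typeOf p.1 = i ∧ typeOf p.2 = j ∧
        rank i j < rank i (ptype p.1) ∧ rank j i < rank j (ptype p.2)).card =
    (Finset.univ.filter fun y : Agent =>
        side y = false ∧ typeOf y = j ∧ rank j i < rank j (ptype y)).card *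
    (Finset.univ.filter fun x : Agent =>
        side x = true ∧ typeOf x = i ∧ rank i j < rank i (ptype x)).card := by
  rw [show (Finset.univ.filter fun p : Agent × Agent =>
        side p.1 = true ∧ side p.2 = false ∧
        typeOf p.1 = i ∧ typeOf p.2 = j ∧
        rank i j < rank i (ptype p.1) ∧ rank j i < rank j (ptype p.2)) =
      (Finset.univ.filter fun x : Agent =>
        side x = true ∧ typeOf x = i ∧ rank i j < rank i (ptype x)) ×ˢ
      (Finset.univ.filter fun y : Agent =>
        side y = false ∧ typeOf y = j ∧ rank j i < rank j (ptype y)) from by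
    ext ⟨x, y⟩
    simp only [Finset.mem_filter, Finset.mem_product, Finset.mem_univ, true_and]
    tauto]
  rw [Finset.card_product, mul_comm]
end

section
/- Let I be a consistently-refined-typed instance of SRTI and let M be a matching in I (with unmatched agents matched to dummies) such that (1) there is no pair of distinct types (i,j) with type i strictly preferring type j to worst_M(i) and type j strictly preferring type i to worst_M(j), and (2) there is no type i with at least two agents such that type i strictly prefers type i to secondworst_M(i). Then there exists a stable matching M' in I such that for every unordered pair of types {i,j}, M and M' contain the same number of pairs consisting of one agent of type i and one of type j. -/
/-!
Relabelling agents inside their types turns `M` into matchings with the same type-pair counts,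
the same acceptability and, for every agent type, the same partner types; among these take one
minimising a lexicographic potential. Its first component sums, over matched agents `v`, the
rank of `v` in its partner's list, weighted by `v`'s preference for the partner's type so heavily
that a better type always dominates; its second component, to be maximised, sums the products of
the two mutual ranks within each pair. In a blocking pair each side either strictly prefers the
other's type to the type of its own partner, or prefers the other individually to a partner of
the other's type. When both sides are of the first kind, conditions (1) and (2) are violated.
Otherwise exchanging one blocking agent with the (same-type) partner of the other lowers the first
component, or keeps it and raises the second one by the rearrangement inequality.
-/

open Finset Function Equiv

def typeWeight (k : ℕ) (trank : ℕ → ℕ → ℕ) (B i j : ℕ) : ℕ :=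
  B ^ ((range (k + 1) ×ˢ range (k + 1)).sup (fun p => trank p.1 p.2) - trank i j)

theorem typeWeight_pos {B : ℕ} (hB : 0 < B) (k : ℕ) (trank : ℕ → ℕ → ℕ) (i j : ℕ) :
    0 < typeWeight k trank B i j :=
  pow_pos hB _

theorem mul_typeWeight_le {k : ℕ} {trank : ℕ → ℕ → ℕ} {B i j j' : ℕ} (hB : 0 < B)
    (hi : i ≤ k) (hj' : j' ≤ k) (h : trank i j < trank i j') :
    B * typeWeight k trank B i j' ≤ typeWeight k trank B i j := by
  have hT : trank i j' ≤ (range (k + 1) ×ˢ range (k + 1)).sup (fun p => trank p.1 p.2) :=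
    le_sup (f := fun p : ℕ × ℕ => trank p.1 p.2) (b := (i, j'))
      (mem_product.2 ⟨mem_range.2 (by omega), mem_range.2 (by omega)⟩)
  rw [typeWeight, typeWeight, ← pow_succ']
  exact Nat.pow_le_pow_right hB (by omega)

section Ranks

variable {Agent : Type} (typeOf : Agent → ℕ) (arank : Agent → Agent → ℕ)

open Classical in
noncomputable def typeRank (t : ℕ) (z : Agent) : ℕ :=
  if h : ∃ x, typeOf x = t ∧ x ≠ z then arank h.choose z else 0

def rankBound [Fintype Agent] : ℕ := univ.sup fun x => univ.sup (arank x)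

variable {typeOf arank}

theorem arank_eq_typeRank
    (hsame : ∀ x y z, typeOf x = typeOf y → z ≠ x → z ≠ y → arank x z = arank y z)
    {x z : Agent} (hxz : x ≠ z) : arank x z = typeRank typeOf arank (typeOf x) z := by
  have h : ∃ y, typeOf y = typeOf x ∧ y ≠ z := ⟨x, rfl, hxz⟩
  rw [typeRank, dif_pos h]
  exact hsame _ _ z h.choose_spec.1.symm hxz.symm (Ne.symm h.choose_spec.2)

theorem typeRank_le_rankBound [Fintype Agent] (t : ℕ) (z : Agent) :
    typeRank typeOf arank t z ≤ rankBound arank := by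
  unfold typeRank
  split_ifs with h
  · exact (le_sup (f := arank h.choose) (mem_univ z)).trans
      (le_sup (f := fun x => univ.sup (arank x)) (mem_univ _))
  · exact Nat.zero_le _

end Ranks

section Conjugation

variable {Agent : Type} {typeOf : Agent → ℕ}

def partnerType [DecidableEq Agent] (k : ℕ) (typeOf : Agent → ℕ) (N : Agent → Agent)
    (a : Agent) : ℕ :=
  if N a = a then k else typeOf (N a)

theorem Function.Involutive.conj {M : Agent → Agent} (hM : Involutive M) (σ : Perm Agent) :
    Involutive (σ ∘ M ∘ σ.symm) := by
  intro x
  simp [hM _]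

theorem conj_apply_eq_self_iff (M : Agent → Agent) (σ : Perm Agent) (x : Agent) :
    (σ ∘ M ∘ σ.symm) x = x ↔ M (σ.symm x) = σ.symm x :=
  (σ.eq_symm_apply).symm

theorem typeOf_symm_apply {σ : Perm Agent} (hσ : ∀ a, typeOf (σ a) = typeOf a) (a : Agent) :
    typeOf (σ.symm a) = typeOf a := by
  rw [← hσ, apply_symm_apply]

theorem partnerType_conj [DecidableEq Agent] {σ : Perm Agent}
    (hσ : ∀ a, typeOf (σ a) = typeOf a) (k : ℕ) (M : Agent → Agent) (c : Agent) :
    partnerType k typeOf (σ ∘ M ∘ σ.symm) c = partnerType k typeOf M (σ.symm c) := by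
  simp only [partnerType, comp_apply, hσ, ← Equiv.eq_symm_apply]

theorem arank_conj_lt_dthr {σ : Perm Agent} (hσ : ∀ a, typeOf (σ a) = typeOf a)
    {arank : Agent → Agent → ℕ} {dthr : Agent → ℕ} {trank : ℕ → ℕ → ℕ} {k : ℕ}
    (hdummy : ∀ x z, z ≠ x →
      (arank x z < dthr x ↔ trank (typeOf x) (typeOf z) < trank (typeOf x) k))
    {M : Agent → Agent} (hacc : ∀ a, M a ≠ a → arank a (M a) < dthr a)
    (a : Agent) (ha : (σ ∘ M ∘ σ.symm) a ≠ a) :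
    arank a ((σ ∘ M ∘ σ.symm) a) < dthr a := by
  have ha' : M (σ.symm a) ≠ σ.symm a := (conj_apply_eq_self_iff M σ a).not.1 ha
  have h := (hdummy _ _ ha').1 (hacc _ ha')
  rw [typeOf_symm_apply hσ] at h
  refine (hdummy a _ ha).2 ?_
  simpa only [comp_apply, hσ] using h

theorem card_pairs_conj [Fintype Agent] [DecidableEq Agent] {σ : Perm Agent}
    (hσ : ∀ a, typeOf (σ a) = typeOf a) (M : Agent → Agent) (i j : ℕ) :
    #{a | M a ≠ a ∧ typeOf a = i ∧ typeOf (M a) = j}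
      = #{a | (σ ∘ M ∘ σ.symm) a ≠ a ∧ typeOf a = i ∧
          typeOf ((σ ∘ M ∘ σ.symm) a) = j} :=
  card_equiv σ fun a => by simp [hσ]

end Conjugation

theorem typeOf_swap_apply {Agent : Type} [DecidableEq Agent] {typeOf : Agent → ℕ}
    {x q : Agent} (h : typeOf x = typeOf q) (z : Agent) : typeOf (swap x q z) = typeOf z := by
  rw [swap_apply_def]
  split_ifs <;> simp_all

theorem exists_conj_swap_minimal {Agent β : Type} [Fintype Agent] [DecidableEq Agent]
    [LinearOrder β] (typeOf : Agent → ℕ) (f : (Agent → Agent) → β) (M : Agent → Agent) :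
    ∃ σ : Perm Agent, (∀ a, typeOf (σ a) = typeOf a) ∧ ∀ x q, typeOf x = typeOf q →
      f (σ ∘ M ∘ σ.symm) ≤ f (swap x q ∘ (σ ∘ M ∘ σ.symm) ∘ swap x q) := by
  obtain ⟨σ, hσS, hmin⟩ :=
    exists_min_image ({σ : Perm Agent | ∀ a, typeOf (σ a) = typeOf a})
      (fun σ => f (σ ∘ M ∘ σ.symm)) ⟨1, by simp⟩
  refine ⟨σ, (mem_filter.1 hσS).2, fun x q hxq => ?_⟩
  have hmem := hmin (σ.trans (swap x q)) (by
    simp [(mem_filter.1 hσS).2, typeOf_swap_apply hxq])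
  convert hmem using 2
  funext z
  simp

section PairSum

variable {Agent : Type} [DecidableEq Agent]

def pairTerm (φ : Agent → Agent → ℕ) (N : Agent → Agent) (v : Agent) : ℕ :=
  if N v = v then 0 else φ v (N v)

def pairSum [Fintype Agent] (φ : Agent → Agent → ℕ) (N : Agent → Agent) : ℕ :=
  ∑ v, pairTerm φ N v

variable {φ : Agent → Agent → ℕ} {N N' : Agent → Agent} {typeOf : Agent → ℕ}

theorem pairTerm_eq {v z : Agent} (h : N v = z) (hz : z ≠ v) : pairTerm φ N v = φ v z := by
  rw [pairTerm, if_neg (h ▸ hz), h]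

theorem pairTerm_of_eq {v : Agent} (h : N v = v) : pairTerm φ N v = 0 := if_pos h

theorem pairSum_add_eq_of_eqOn_compl [Fintype Agent] (s : Finset Agent)
    (h : ∀ v ∉ s, pairTerm φ N' v = pairTerm φ N v) :
    pairSum φ N' + ∑ v ∈ s, pairTerm φ N v
      = pairSum φ N + ∑ v ∈ s, pairTerm φ N' v := by
  unfold pairSum
  rw [← sum_add_sum_compl s (pairTerm φ N'), ← sum_add_sum_compl s (pairTerm φ N),
    sum_congr rfl fun v hv => h v (mem_compl.1 hv)]
  ring

theorem pairTerm_typed_swap (hφ : ∀ v z z', typeOf z = typeOf z' → φ v z = φ v z')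
    {x q v : Agent} (hxq : typeOf x = typeOf q) (hvx : v ≠ x) (hvq : v ≠ q) :
    pairTerm φ (swap x q ∘ N ∘ swap x q) v = pairTerm φ N v := by
  simp only [pairTerm, comp_apply, swap_apply_of_ne_of_ne hvx hvq, swap_apply_eq_iff]
  split_ifs
  · rfl
  · exact hφ _ _ _ (typeOf_swap_apply hxq _)

theorem pairSum_typed_swap_add [Fintype Agent]
    (hφ : ∀ v z z', typeOf z = typeOf z' → φ v z = φ v z')
    {x q : Agent} (hxq : x ≠ q) (htxq : typeOf x = typeOf q) :
    pairSum φ (swap x q ∘ N ∘ swap x q) + (pairTerm φ N x + pairTerm φ N q)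
      = pairSum φ N + (pairTerm φ (swap x q ∘ N ∘ swap x q) x
          + pairTerm φ (swap x q ∘ N ∘ swap x q) q) := by
  rw [← sum_pair hxq, ← sum_pair hxq]
  refine pairSum_add_eq_of_eqOn_compl _ fun v hv => ?_
  simp only [mem_insert, mem_singleton, not_or] at hv
  exact pairTerm_typed_swap hφ htxq hv.1 hv.2

end PairSum

section RankWeights

variable {Agent : Type}

def weightedRank (typeOf : Agent → ℕ) (w : ℕ → ℕ → ℕ) (rk : ℕ → Agent → ℕ) (v z : Agent) :
    ℕ :=
  w (typeOf v) (typeOf z) * rk (typeOf z) v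

def rankProduct (typeOf : Agent → ℕ) (rk : ℕ → Agent → ℕ) (v z : Agent) : ℕ :=
  rk (typeOf z) v * rk (typeOf v) z

theorem weightedRank_congr {typeOf : Agent → ℕ} (w : ℕ → ℕ → ℕ) (rk : ℕ → Agent → ℕ)
    (v z z' : Agent) (h : typeOf z = typeOf z') :
    weightedRank typeOf w rk v z = weightedRank typeOf w rk v z' := by
  rw [weightedRank, weightedRank, h]

end RankWeights

section Swaps

variable {Agent : Type} [Fintype Agent] [DecidableEq Agent] {typeOf : Agent → ℕ}
  {N : Agent → Agent} {x y : Agent}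

theorem pairSum_weightedRank_swap_lt {w : ℕ → ℕ → ℕ} {rk : ℕ → Agent → ℕ} {K : ℕ}
    (hN : Involutive N) (hrk : ∀ t z, rk t z ≤ K) (hxy : x ≠ y) (hNxy : N x ≠ y)
    (hNy : N y ≠ y) (hty : typeOf (N y) = typeOf x)
    (hpref : rk (typeOf y) x < rk (typeOf y) (N y)) (hpos : 0 < w (typeOf x) (typeOf y))
    (hdom : N x ≠ x → K * w (typeOf x) (typeOf (N x)) < w (typeOf x) (typeOf y)) :
    pairSum (weightedRank typeOf w rk) (swap x (N y) ∘ N ∘ swap x (N y))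
      < pairSum (weightedRank typeOf w rk) N := by
  set q := N y
  have hxq : x ≠ q := fun h => hNxy (by rw [h, hN])
  have key := pairSum_typed_swap_add (N := N) (weightedRank_congr w rk) hxq hty.symm
  have hNq : N q = y := hN y
  have hN'x : (swap x q ∘ N ∘ swap x q) x = y := by
    simp [hNq, swap_apply_of_ne_of_ne (Ne.symm hxy) (Ne.symm hNy)]
  rw [pairTerm_eq hN'x hxy.symm, pairTerm_eq hNq hNy.symm] at key
  simp only [weightedRank, hty] at key
  have hmono := Nat.mul_le_mul_left (w (typeOf x) (typeOf y)) hpref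
  by_cases hNx : N x = x
  · have hN'q : (swap x q ∘ N ∘ swap x q) q = q := by simp [hNx]
    rw [pairTerm_of_eq hNx, pairTerm_of_eq hN'q] at key
    nlinarith
  · have hNxq : N x ≠ q := fun h => hxy (by rw [← hNq, ← h, hN])
    have hN'q : (swap x q ∘ N ∘ swap x q) q = N x := by
      simp [swap_apply_of_ne_of_ne hNx hNxq]
    rw [pairTerm_eq rfl hNx, pairTerm_eq hN'q hNxq] at key
    simp only [weightedRank, hty] at key
    have := Nat.mul_le_mul_left (w (typeOf x) (typeOf (N x))) (hrk (typeOf (N x)) q)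
    nlinarith [hdom hNx]

theorem pairSum_weightedRank_swap_eq {w : ℕ → ℕ → ℕ} {rk : ℕ → Agent → ℕ}
    (hN : Involutive N) (hxy : x ≠ y) (hNxy : N x ≠ y) (hNx : N x ≠ x) (hNy : N y ≠ y)
    (htx : typeOf (N x) = typeOf y) (hty : typeOf (N y) = typeOf x) :
    pairSum (weightedRank typeOf w rk) (swap x (N y) ∘ N ∘ swap x (N y))
      = pairSum (weightedRank typeOf w rk) N := by
  set q := N y
  have hxq : x ≠ q := fun h => hNxy (by rw [h, hN])
  have hNq : N q = y := hN y
  have hNxq : N x ≠ q := fun h => hxy (by rw [← hNq, ← h, hN])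
  have key := pairSum_typed_swap_add (N := N) (weightedRank_congr w rk) hxq hty.symm
  have hN'x : (swap x q ∘ N ∘ swap x q) x = y := by
    simp [hNq, swap_apply_of_ne_of_ne (Ne.symm hxy) (Ne.symm hNy)]
  have hN'q : (swap x q ∘ N ∘ swap x q) q = N x := by
    simp [swap_apply_of_ne_of_ne hNx hNxq]
  rw [pairTerm_eq hN'x hxy.symm, pairTerm_eq hNq hNy.symm, pairTerm_eq rfl hNx,
    pairTerm_eq hN'q hNxq] at key
  simp only [weightedRank, hty, htx] at key
  omega

theorem pairSum_rankProduct_lt_swap {rk : ℕ → Agent → ℕ}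
    (hN : Involutive N) (hxy : x ≠ y) (hNxy : N x ≠ y) (hNx : N x ≠ x) (hNy : N y ≠ y)
    (htx : typeOf (N x) = typeOf y) (hty : typeOf (N y) = typeOf x)
    (hprefx : rk (typeOf x) y < rk (typeOf x) (N x))
    (hprefy : rk (typeOf y) x < rk (typeOf y) (N y)) :
    pairSum (rankProduct typeOf rk) N
      < pairSum (rankProduct typeOf rk) (swap x (N y) ∘ N ∘ swap x (N y)) := by
  have hNp : N (N x) = x := hN x
  have hNq : N (N y) = y := hN y
  generalize hp : N x = p at *
  generalize hq : N y = q at *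
  have hxq : x ≠ q := fun h => hNxy (by rw [← hp, h, hNq])
  have hpq : p ≠ q := fun h => hxy (by rw [← hNp, h, hNq])
  have hN' : ∀ v, (swap x q ∘ N ∘ swap x q) v = swap x q (N (swap x q v)) := fun v => rfl
  have key := pairSum_add_eq_of_eqOn_compl (φ := rankProduct typeOf rk)
    (N' := swap x q ∘ N ∘ swap x q) (N := N) {x, y, p, q} fun v hv => by
      simp only [mem_insert, mem_singleton, not_or] at hv
      have hNvx : N v ≠ x := fun h => hv.2.2.1 (by rw [← hN v, h, hp])
      have hNvq : N v ≠ q := fun h => hv.2.1 (by rw [← hN v, h, hNq])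
      simp only [pairTerm, hN', swap_apply_of_ne_of_ne hv.1 hv.2.2.2,
        swap_apply_of_ne_of_ne hNvx hNvq]
  rw [sum_insert (by simp [hxy, hNx.symm, hxq]), sum_insert (by simp [hNxy.symm, hNy.symm]),
    sum_insert (by simp [hpq]), sum_singleton, sum_insert (by simp [hxy, hNx.symm, hxq]),
    sum_insert (by simp [hNxy.symm, hNy.symm]), sum_insert (by simp [hpq]), sum_singleton] at key
  rw [pairTerm_eq hp hNx, pairTerm_eq hq hNy, pairTerm_eq hNp hNx.symm, pairTerm_eq hNq hNy.symm,
    pairTerm_eq (v := x) (z := y) (by simp [hNq, swap_apply_of_ne_of_ne hxy.symm hNy.symm])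
      hxy.symm,
    pairTerm_eq (v := y) (z := x) (by simp [swap_apply_of_ne_of_ne hxy.symm hNy.symm, hq]) hxy,
    pairTerm_eq (v := p) (z := q) (by simp [swap_apply_of_ne_of_ne hNx hpq, hNp]) hpq.symm,
    pairTerm_eq (v := q) (z := p) (by simp [swap_apply_of_ne_of_ne hNx hpq, hp]) hpq] at key
  simp only [rankProduct, htx, hty] at key
  -- with `A < B` and `C < D` the ranks of `hprefx` and `hprefy`, the exchange gains
  -- `2 (B - A) (D - C) > 0`
  nlinarith [Nat.mul_lt_mul_of_lt_of_lt hprefx hprefy]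

end Swaps

section Potential

variable {Agent : Type} [Fintype Agent] [DecidableEq Agent]

noncomputable def potential (k : ℕ) (typeOf : Agent → ℕ) (trank : ℕ → ℕ → ℕ)
    (arank : Agent → Agent → ℕ) (N : Agent → Agent) : ℕ ×ₗ ℕᵒᵈ :=
  toLex (pairSum (weightedRank typeOf (typeWeight k trank (rankBound arank + 1))
      (typeRank typeOf arank)) N,
    OrderDual.toDual (pairSum (rankProduct typeOf (typeRank typeOf arank)) N))

variable {typeOf : Agent → ℕ} {k : ℕ} {trank : ℕ → ℕ → ℕ}
  {arank : Agent → Agent → ℕ} {N : Agent → Agent} {x y : Agent}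

theorem potential_swap_lt_of_typeLevel (htype : ∀ a, typeOf a < k) (hN : Involutive N)
    (hxy : x ≠ y) (hNxy : N x ≠ y) (hNy : N y ≠ y) (hty : typeOf (N y) = typeOf x)
    (hpref : typeRank typeOf arank (typeOf y) x < typeRank typeOf arank (typeOf y) (N y))
    (htl : trank (typeOf x) (typeOf y) < trank (typeOf x) (partnerType k typeOf N x)) :
    potential k typeOf trank arank (swap x (N y) ∘ N ∘ swap x (N y))
      < potential k typeOf trank arank N := by
  have hB := Nat.succ_pos (rankBound arank)
  refine Prod.Lex.toLex_lt_toLex.2 <| Or.inl <| pairSum_weightedRank_swap_lt hN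
    typeRank_le_rankBound hxy hNxy hNy hty hpref (typeWeight_pos hB ..) fun hNx => ?_
  rw [partnerType, if_neg hNx] at htl
  have := mul_typeWeight_le hB (htype x).le (htype (N x)).le htl
  have := typeWeight_pos hB k trank (typeOf x) (typeOf (N x))
  nlinarith

theorem potential_swap_lt_of_individual (hN : Involutive N) (hxy : x ≠ y) (hNxy : N x ≠ y)
    (hNx : N x ≠ x) (hNy : N y ≠ y) (htx : typeOf (N x) = typeOf y)
    (hty : typeOf (N y) = typeOf x)
    (hprefx : typeRank typeOf arank (typeOf x) y < typeRank typeOf arank (typeOf x) (N x))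
    (hprefy : typeRank typeOf arank (typeOf y) x < typeRank typeOf arank (typeOf y) (N y)) :
    potential k typeOf trank arank (swap x (N y) ∘ N ∘ swap x (N y))
      < potential k typeOf trank arank N :=
  Prod.Lex.toLex_lt_toLex.2 <| Or.inr
    ⟨pairSum_weightedRank_swap_eq hN hxy hNxy hNx hNy htx hty,
      OrderDual.toDual_lt_toDual.2 <|
        pairSum_rankProduct_lt_swap hN hxy hNxy hNx hNy htx hty hprefx hprefy⟩

end Potential

section Blocking

variable {Agent : Type} [DecidableEq Agent] {typeOf : Agent → ℕ} {k : ℕ}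
  {trank : ℕ → ℕ → ℕ} {arank : Agent → Agent → ℕ} {dthr : Agent → ℕ}

def Prefers (arank : Agent → Agent → ℕ) (dthr : Agent → ℕ) (N : Agent → Agent)
    (a b : Agent) : Prop :=
  if N a = a then arank a b < dthr a else arank a b < arank a (N a)

theorem prefers_typeLevel_or_individual
    (hsame : ∀ x y z, typeOf x = typeOf y → z ≠ x → z ≠ y → arank x z = arank y z)
    (hcross : ∀ x z w, z ≠ x → w ≠ x → typeOf z ≠ typeOf w →
      (arank x z < arank x w ↔ trank (typeOf x) (typeOf z) < trank (typeOf x) (typeOf w)))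
    (hdummy : ∀ x z, z ≠ x →
      (arank x z < dthr x ↔ trank (typeOf x) (typeOf z) < trank (typeOf x) k))
    {N : Agent → Agent} {a b : Agent} (hab : a ≠ b) (h : Prefers arank dthr N a b) :
    trank (typeOf a) (typeOf b) < trank (typeOf a) (partnerType k typeOf N a) ∨
      N a ≠ a ∧ typeOf (N a) = typeOf b ∧
        typeRank typeOf arank (typeOf a) b < typeRank typeOf arank (typeOf a) (N a) := by
  unfold Prefers at h
  unfold partnerType
  split_ifs at h ⊢ with hNa
  · exact Or.inl ((hdummy a b hab.symm).1 h)
  · by_cases htyp : typeOf (N a) = typeOf b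
    · rw [arank_eq_typeRank hsame hab, arank_eq_typeRank hsame (Ne.symm hNa)] at h
      exact Or.inr ⟨hNa, htyp, h⟩
    · exact Or.inl ((hcross a b (N a) hab.symm hNa (Ne.symm htyp)).1 h)

theorem not_typeLevel_blocking (htype : ∀ a, typeOf a < k) {worst secondworst : ℕ → ℕ}
    (h1 : ¬ ∃ i j, i < k ∧ j < k ∧ i ≠ j ∧
        trank i j < trank i (worst i) ∧ trank j i < trank j (worst j))
    (h2 : ¬ ∃ i, i < k ∧ (∃ a b : Agent, a ≠ b ∧ typeOf a = i ∧ typeOf b = i) ∧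
        trank i i < trank i (secondworst i))
    {N : Agent → Agent}
    (hworst : ∀ c,
      trank (typeOf c) (partnerType k typeOf N c) ≤ trank (typeOf c) (worst (typeOf c)))
    (hsecond : ∀ a b, a ≠ b → typeOf a = typeOf b →
      trank (typeOf a) (partnerType k typeOf N a) ≤ trank (typeOf a) (secondworst (typeOf a)) ∨
      trank (typeOf a) (partnerType k typeOf N b) ≤ trank (typeOf a) (secondworst (typeOf a)))
    {a b : Agent} (hab : a ≠ b)
    (ha : trank (typeOf a) (typeOf b) < trank (typeOf a) (partnerType k typeOf N a))
    (hb : trank (typeOf b) (typeOf a) < trank (typeOf b) (partnerType k typeOf N b)) : False := by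
  by_cases htab : typeOf a = typeOf b
  · rw [htab] at ha hb
    refine h2 ⟨typeOf b, htype b, ⟨a, b, hab, htab, rfl⟩, ?_⟩
    rcases hsecond a b hab htab with h | h <;> rw [htab] at h <;> omega
  · exact h1 ⟨typeOf a, typeOf b, htype a, htype b, htab,
      ha.trans_le (hworst a), hb.trans_le (hworst b)⟩

end Blocking

section Stability

variable {Agent : Type} [DecidableEq Agent] {typeOf : Agent → ℕ} {k : ℕ}
  {trank : ℕ → ℕ → ℕ} {worst secondworst : ℕ → ℕ}

theorem trank_partnerType_conj_le_worst (htype : ∀ a, typeOf a < k) {M : Agent → Agent}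
    (hworst : ∀ i < k, (∃ a, typeOf a = i) →
      (∃ a, typeOf a = i ∧ (if M a = a then k else typeOf (M a)) = worst i) ∧
      ∀ a, typeOf a = i →
        trank i (if M a = a then k else typeOf (M a)) ≤ trank i (worst i))
    {σ : Perm Agent} (hσ : ∀ a, typeOf (σ a) = typeOf a) (c : Agent) :
    trank (typeOf c) (partnerType k typeOf (σ ∘ M ∘ σ.symm) c)
      ≤ trank (typeOf c) (worst (typeOf c)) := by
  rw [partnerType_conj hσ]
  exact (hworst _ (htype c) ⟨c, rfl⟩).2 _ (typeOf_symm_apply hσ c)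

theorem trank_partnerType_conj_le_secondworst (htype : ∀ a, typeOf a < k) {M : Agent → Agent}
    (hsecond : ∀ i < k, (∃ a b : Agent, a ≠ b ∧ typeOf a = i ∧ typeOf b = i) →
      ∃ a, typeOf a = i ∧ (if M a = a then k else typeOf (M a)) = worst i ∧
        (∃ b, b ≠ a ∧ typeOf b = i ∧
          (if M b = b then k else typeOf (M b)) = secondworst i) ∧
        trank i (secondworst i) ≤ trank i (worst i) ∧
        ∀ c, typeOf c = i → c ≠ a →
          trank i (if M c = c then k else typeOf (M c)) ≤ trank i (secondworst i))
    {σ : Perm Agent} (hσ : ∀ a, typeOf (σ a) = typeOf a) {a b : Agent} (hab : a ≠ b)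
    (htab : typeOf a = typeOf b) :
    trank (typeOf a) (partnerType k typeOf (σ ∘ M ∘ σ.symm) a)
        ≤ trank (typeOf a) (secondworst (typeOf a)) ∨
      trank (typeOf a) (partnerType k typeOf (σ ∘ M ∘ σ.symm) b)
        ≤ trank (typeOf a) (secondworst (typeOf a)) := by
  have hta := typeOf_symm_apply hσ a
  have htb : typeOf (σ.symm b) = typeOf a := (typeOf_symm_apply hσ b).trans htab.symm
  obtain ⟨a₀, -, -, -, -, hle⟩ :=
    hsecond (typeOf a) (htype a) ⟨_, _, σ.symm.injective.ne hab, hta, htb⟩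
  rw [partnerType_conj hσ, partnerType_conj hσ]
  by_cases ha₀ : σ.symm a = a₀
  · exact Or.inr (hle _ htb fun hb => hab (σ.symm.injective (ha₀.trans hb.symm)))
  · exact Or.inl (hle _ hta ha₀)

theorem not_blocking_of_swap_minimal [Fintype Agent] {arank : Agent → Agent → ℕ}
    {dthr : Agent → ℕ}
    (htype : ∀ a, typeOf a < k)
    (hsame : ∀ x y z, typeOf x = typeOf y → z ≠ x → z ≠ y → arank x z = arank y z)
    (hcross : ∀ x z w, z ≠ x → w ≠ x → typeOf z ≠ typeOf w →
      (arank x z < arank x w ↔ trank (typeOf x) (typeOf z) < trank (typeOf x) (typeOf w)))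
    (hdummy : ∀ x z, z ≠ x →
      (arank x z < dthr x ↔ trank (typeOf x) (typeOf z) < trank (typeOf x) k))
    (h1 : ¬ ∃ i j, i < k ∧ j < k ∧ i ≠ j ∧
        trank i j < trank i (worst i) ∧ trank j i < trank j (worst j))
    (h2 : ¬ ∃ i, i < k ∧ (∃ a b : Agent, a ≠ b ∧ typeOf a = i ∧ typeOf b = i) ∧
        trank i i < trank i (secondworst i))
    {N : Agent → Agent} (hN : Involutive N)
    (hworst : ∀ c,
      trank (typeOf c) (partnerType k typeOf N c) ≤ trank (typeOf c) (worst (typeOf c)))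
    (hsecond : ∀ a b, a ≠ b → typeOf a = typeOf b →
      trank (typeOf a) (partnerType k typeOf N a) ≤ trank (typeOf a) (secondworst (typeOf a)) ∨
      trank (typeOf a) (partnerType k typeOf N b) ≤ trank (typeOf a) (secondworst (typeOf a)))
    (hmin : ∀ x q, typeOf x = typeOf q →
      potential k typeOf trank arank N
        ≤ potential k typeOf trank arank (swap x q ∘ N ∘ swap x q)) :
    ¬ ∃ a b, a ≠ b ∧ N a ≠ b ∧
      Prefers arank dthr N a b ∧ Prefers arank dthr N b a := by
  rintro ⟨a, b, hab, hNab, ha, hb⟩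
  have hNba : N b ≠ a := fun h => hNab (by rw [← h, hN])
  rcases prefers_typeLevel_or_individual hsame hcross hdummy hab ha with ha | ⟨hNa, hta, ha⟩ <;>
    rcases prefers_typeLevel_or_individual hsame hcross hdummy hab.symm hb with
      hb | ⟨hNb, htb, hb⟩
  · exact not_typeLevel_blocking htype h1 h2 hworst hsecond hab ha hb
  · exact (hmin a (N b) htb.symm).not_gt
      (potential_swap_lt_of_typeLevel htype hN hab hNab hNb htb hb ha)
  · exact (hmin b (N a) hta.symm).not_gt
      (potential_swap_lt_of_typeLevel htype hN hab.symm hNba hNa hta ha hb)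
  · exact (hmin a (N b) htb.symm).not_gt
      (potential_swap_lt_of_individual hN hab hNab hNa hNb hta htb ha hb)

end Stability

theorem refined_typed_srti_realisation_general
    {Agent : Type} [Fintype Agent] [DecidableEq Agent]
    (k : ℕ) (typeOf : Agent → ℕ) (htype : ∀ a, typeOf a < k)
    (trank : ℕ → ℕ → ℕ)
    (arank : Agent → Agent → ℕ) (dthr : Agent → ℕ)
    (hsame : ∀ x y z, typeOf x = typeOf y → z ≠ x → z ≠ y → arank x z = arank y z)
    (hcross : ∀ x z w, z ≠ x → w ≠ x → typeOf z ≠ typeOf w →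
        (arank x z < arank x w ↔ trank (typeOf x) (typeOf z) < trank (typeOf x) (typeOf w)))
    (hdummy : ∀ x z, z ≠ x →
        (arank x z < dthr x ↔ trank (typeOf x) (typeOf z) < trank (typeOf x) k))
    (M : Agent → Agent) (hinv : ∀ a, M (M a) = a)
    (hacc : ∀ a, M a ≠ a → arank a (M a) < dthr a)
    (worst secondworst : ℕ → ℕ)
    (hworst : ∀ i < k, (∃ a, typeOf a = i) →
        (∃ a, typeOf a = i ∧ (if M a = a then k else typeOf (M a)) = worst i) ∧
        ∀ a, typeOf a = i →
          trank i (if M a = a then k else typeOf (M a)) ≤ trank i (worst i))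
    (hsecond : ∀ i < k, (∃ a b : Agent, a ≠ b ∧ typeOf a = i ∧ typeOf b = i) →
        ∃ a, typeOf a = i ∧ (if M a = a then k else typeOf (M a)) = worst i ∧
          (∃ b, b ≠ a ∧ typeOf b = i ∧
            (if M b = b then k else typeOf (M b)) = secondworst i) ∧
          trank i (secondworst i) ≤ trank i (worst i) ∧
          ∀ c, typeOf c = i → c ≠ a →
            trank i (if M c = c then k else typeOf (M c)) ≤ trank i (secondworst i))
    (h1 : ¬ ∃ i j, i < k ∧ j < k ∧ i ≠ j ∧
        trank i j < trank i (worst i) ∧ trank j i < trank j (worst j))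
    (h2 : ¬ ∃ i, i < k ∧ (∃ a b : Agent, a ≠ b ∧ typeOf a = i ∧ typeOf b = i) ∧
        trank i i < trank i (secondworst i)) :
    ∃ M' : Agent → Agent, (∀ a, M' (M' a) = a) ∧
      (∀ a, M' a ≠ a → arank a (M' a) < dthr a) ∧
      (¬ ∃ a b : Agent, a ≠ b ∧ M' a ≠ b ∧
          (if M' a = a then arank a b < dthr a else arank a b < arank a (M' a)) ∧
          (if M' b = b then arank b a < dthr b else arank b a < arank b (M' b))) ∧
      (∀ i j, (Finset.univ.filter fun a => M a ≠ a ∧ typeOf a = i ∧ typeOf (M a) = j).card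
            = (Finset.univ.filter fun a => M' a ≠ a ∧ typeOf a = i ∧ typeOf (M' a) = j).card) := by
  obtain ⟨σ, hσ, hmin⟩ := exists_conj_swap_minimal typeOf (potential k typeOf trank arank) M
  have hinv' : Involutive (σ ∘ M ∘ σ.symm) := Involutive.conj hinv σ
  exact ⟨σ ∘ M ∘ σ.symm, hinv', arank_conj_lt_dthr hσ hdummy hacc,
    not_blocking_of_swap_minimal htype hsame hcross hdummy h1 h2 hinv'
      (trank_partnerType_conj_le_worst htype hworst hσ)
      (fun _ _ => trank_partnerType_conj_le_secondworst htype hsecond hσ) hmin,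
    card_pairs_conj hσ M⟩

/-- Let `I` be a consistently-refined-typed instance of SRTI
(individual ranks `arank` refine the type-level ranks `trank`, `dthr` is the rank
of the dummy) and let `M` be a matching satisfying the two type-level conditions
(no mutually-preferring pair of distinct types w.r.t. `worst`, no type with at
least two agents preferring itself to its second-worst).  Then there is a stable
matching `M'` containing, for each pair of types `(i,j)`, the same number of pairs
of one agent of type `i` and one of type `j` as `M`. -/
theorem refined_typed_srti_realisation
    {Agent : Type} [Fintype Agent] [DecidableEq Agent]
    (k : ℕ) (typeOf : Agent → ℕ) (htype : ∀ a, typeOf a < k)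
    (trank : ℕ → ℕ → ℕ)
    (arank : Agent → Agent → ℕ) (dthr : Agent → ℕ)
    (hsame : ∀ x y z, typeOf x = typeOf y → z ≠ x → z ≠ y → arank x z = arank y z)
    (hsamed : ∀ x y, typeOf x = typeOf y → dthr x = dthr y)
    (hcross : ∀ x z w, z ≠ x → w ≠ x → typeOf z ≠ typeOf w →
        (arank x z < arank x w ↔ trank (typeOf x) (typeOf z) < trank (typeOf x) (typeOf w)))
    (hdummy : ∀ x z, z ≠ x →
        (arank x z < dthr x ↔ trank (typeOf x) (typeOf z) < trank (typeOf x) k))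
    (M : Agent → Agent) (hinv : ∀ a, M (M a) = a)
    (hacc : ∀ a, M a ≠ a → arank a (M a) < dthr a)
    (worst secondworst : ℕ → ℕ)
    (hworst : ∀ i < k, (∃ a, typeOf a = i) →
        (∃ a, typeOf a = i ∧ (if M a = a then k else typeOf (M a)) = worst i) ∧
        ∀ a, typeOf a = i →
          trank i (if M a = a then k else typeOf (M a)) ≤ trank i (worst i))
    (hsecond : ∀ i < k, (∃ a b : Agent, a ≠ b ∧ typeOf a = i ∧ typeOf b = i) →
        ∃ a, typeOf a = i ∧ (if M a = a then k else typeOf (M a)) = worst i ∧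
          (∃ b, b ≠ a ∧ typeOf b = i ∧
            (if M b = b then k else typeOf (M b)) = secondworst i) ∧
          trank i (secondworst i) ≤ trank i (worst i) ∧
          ∀ c, typeOf c = i → c ≠ a →
            trank i (if M c = c then k else typeOf (M c)) ≤ trank i (secondworst i))
    (h1 : ¬ ∃ i j, i < k ∧ j < k ∧ i ≠ j ∧
        trank i j < trank i (worst i) ∧ trank j i < trank j (worst j))
    (h2 : ¬ ∃ i, i < k ∧ (∃ a b : Agent, a ≠ b ∧ typeOf a = i ∧ typeOf b = i) ∧
        trank i i < trank i (secondworst i)) :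
    ∃ M' : Agent → Agent, (∀ a, M' (M' a) = a) ∧
      (∀ a, M' a ≠ a → arank a (M' a) < dthr a) ∧
      (¬ ∃ a b : Agent, a ≠ b ∧ M' a ≠ b ∧
          (if M' a = a then arank a b < dthr a else arank a b < arank a (M' a)) ∧
          (if M' b = b then arank b a < dthr b else arank b a < arank b (M' b))) ∧
      (∀ i j, (Finset.univ.filter fun a => M a ≠ a ∧ typeOf a = i ∧ typeOf (M a) = j).card
            = (Finset.univ.filter fun a => M' a ≠ a ∧ typeOf a = i ∧ typeOf (M' a) = j).card) :=
  refined_typed_srti_realisation_general k typeOf htype trank arank dthr hsame hcross hdummy M hinv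
    hacc worst secondworst hworst hsecond h1 h2
end

section
/- Let I be a consistently-refined-typed instance of SRTI, and let I_0 be the typed instance obtained from I by making every agent indifferent between all candidates of the same type (placing each whole type into a single tie). Then every matching that is stable in I is also stable in I_0. -/
/-- Let `I` be a consistently-refined-typed instance of SRTI and `I₀`
the typed instance obtained by making every agent indifferent between all agents of
the same type (so comparisons are made via the type-level ranks `trank` only).
Every matching that is stable in `I` (w.r.t. the refined ranks `arank`) is also
stable in `I₀` (w.r.t. the type-level ranks). -/
theorem refined_typed_srti_stable_coarsening
    {Agent : Type} [Fintype Agent] [DecidableEq Agent]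
    (k : ℕ) (typeOf : Agent → ℕ) (htype : ∀ a, typeOf a < k)
    (trank : ℕ → ℕ → ℕ)
    (arank : Agent → Agent → ℕ) (dthr : Agent → ℕ)
    (hsame : ∀ x y z, typeOf x = typeOf y → z ≠ x → z ≠ y → arank x z = arank y z)
    (hsamed : ∀ x y, typeOf x = typeOf y → dthr x = dthr y)
    (hcross : ∀ x z w, z ≠ x → w ≠ x → typeOf z ≠ typeOf w →
        (arank x z < arank x w ↔ trank (typeOf x) (typeOf z) < trank (typeOf x) (typeOf w)))
    (hdummy : ∀ x z, z ≠ x →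
        (arank x z < dthr x ↔ trank (typeOf x) (typeOf z) < trank (typeOf x) k))
    (M : Agent → Agent) (hinv : ∀ a, M (M a) = a)
    (hacc : ∀ a, M a ≠ a → arank a (M a) < dthr a)
    -- M is stable in I
    (hstab : ¬ ∃ a b : Agent, a ≠ b ∧ M a ≠ b ∧
        (if M a = a then arank a b < dthr a else arank a b < arank a (M a)) ∧
        (if M b = b then arank b a < dthr b else arank b a < arank b (M b))) :
    -- M is stable in I₀
    ¬ ∃ a b : Agent, a ≠ b ∧ M a ≠ b ∧
        trank (typeOf a) (typeOf b) <
          trank (typeOf a) (if M a = a then k else typeOf (M a)) ∧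
        trank (typeOf b) (typeOf a) <
          trank (typeOf b) (if M b = b then k else typeOf (M b)) := by
  rintro ⟨a, b, hab, hMab, h1, h2⟩
  apply hstab
  have key : ∀ x y : Agent, y ≠ x → M x ≠ y →
      trank (typeOf x) (typeOf y) <
        trank (typeOf x) (if M x = x then k else typeOf (M x)) →
      (if M x = x then arank x y < dthr x else arank x y < arank x (M x)) := by
    intro x y hyx hMxy ht
    by_cases h : M x = x
    · simp only [h, if_true] at ht ⊢
      exact (hdummy x y hyx).mpr ht
    · simp only [h, if_false] at ht ⊢
      have hne : typeOf y ≠ typeOf (M x) := by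
        intro he; rw [he] at ht; exact lt_irrefl _ ht
      exact (hcross x y (M x) hyx h hne).mpr ht
  have hMba : M b ≠ a := by
    intro h; apply hMab; rw [← h, hinv]
  exact ⟨a, b, hab, hMab, key a b (Ne.symm hab) hMab h1, key b a hab hMba h2⟩
end

section
/- In the clique-reduction SMTI instance I (defined in the context), if U is a set of r vertices of G inducing a clique, then the matching M that matches the r type-4 women corresponding to U with the r type-2 men, matches the binom(r,2) type-1 men corresponding to edges within U with the binom(r,2) type-5 women, matches the remaining n − r type-4 women with the n − r type-3 men, and matches the remaining m − binom(r,2) type-1 men with the m − binom(r,2) type-6 women, is a complete stable matching in I. -/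
variable (V : Type) [Fintype V] [DecidableEq V] (G : SimpleGraph V) [DecidableRel G.Adj] (r : ℕ)

/-- The men of the clique-reduction instance: type-1 men are the edges of `G`,
then `r` type-2 men and `card V − r` type-3 men. -/
abbrev CliqueMen : Type :=
  {e : Sym2 V // e ∈ G.edgeFinset} ⊕ (Fin r ⊕ Fin (Fintype.card V - r))

/-- The women of the clique-reduction instance: type-4 women are the vertices of
`G`, then `binom(r,2)` type-5 women and `m − binom(r,2)` type-6 women. -/
abbrev CliqueWom : Type :=
  V ⊕ (Fin (r.choose 2) ⊕ Fin (G.edgeFinset.card - r.choose 2))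

/-- Preference list of a man (smaller rank = more preferred, `none` = unacceptable).
A type-1 man `e` ranks: type 6 (rank 0), then his two exceptional women — the
endpoints of `e` — (rank 1), then type 5 (rank 2), then the other type-4 women
(rank 3).  Types 2 and 3 find exactly the type-4 women acceptable, all tied. -/
def cliqueManRank : CliqueMen V G r → CliqueWom V G r → Option ℕ
  | Sum.inl e, Sum.inl v => if v ∈ (e.1 : Sym2 V) then some 1 else some 3
  | Sum.inl _, Sum.inr (Sum.inl _) => some 2
  | Sum.inl _, Sum.inr (Sum.inr _) => some 0
  | Sum.inr _, Sum.inl _ => some 0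
  | Sum.inr _, Sum.inr _ => none

/-- Preference list of a woman: type-4 women rank type 2 (rank 0), then type 1
(rank 1), then type 3 (rank 2); types 5 and 6 find exactly the type-1 men
acceptable, all tied. -/
def cliqueWomRank : CliqueWom V G r → CliqueMen V G r → Option ℕ
  | Sum.inl _, Sum.inl _ => some 1
  | Sum.inl _, Sum.inr (Sum.inl _) => some 0
  | Sum.inl _, Sum.inr (Sum.inr _) => some 2
  | Sum.inr _, Sum.inl _ => some 0
  | Sum.inr _, Sum.inr _ => none

/-- `OptLt a b`: rank `a` is strictly better than rank `b` (where `none` means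
unacceptable/unmatched and any acceptable rank beats it). -/
def OptLt (a b : Option ℕ) : Prop := ∃ x, a = some x ∧ ∀ y, b = some y → x < y

/-- A complete matching (a bijection between men and women) is stable if it only
matches mutually acceptable pairs and admits no blocking pair. -/
def CliqueStableCSM (M : CliqueMen V G r ≃ CliqueWom V G r) : Prop :=
  (∀ a, (cliqueManRank V G r a (M a)).isSome = true ∧
        (cliqueWomRank V G r (M a) a).isSome = true) ∧
  ¬ ∃ a w, M a ≠ w ∧ OptLt (cliqueManRank V G r a w) (cliqueManRank V G r a (M a)) ∧
      OptLt (cliqueWomRank V G r w a) (cliqueWomRank V G r w (M.symm w))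

/-- If `U` is a set of `r` vertices inducing a clique in `G`, then
any matching of the described shape — type-2 men with the type-4 women in `U`,
type-5 women with the type-1 men corresponding to edges inside `U`, type-3 men with
the remaining type-4 women, type-6 women with the remaining type-1 men — is a
complete stable matching of the clique-reduction instance. -/
theorem clique_gives_complete_stable_matching
    (hr : r ≤ Fintype.card V) (hm : r.choose 2 ≤ G.edgeFinset.card)
    (U : Finset V) (hUcard : U.card = r) (hUclique : G.IsClique (U : Set V))
    (M : CliqueMen V G r ≃ CliqueWom V G r)
    (h2 : ∀ i : Fin r, ∃ v ∈ U, M (Sum.inr (Sum.inl i)) = Sum.inl v)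
    (h3 : ∀ i : Fin (Fintype.card V - r), ∃ v, v ∉ U ∧ M (Sum.inr (Sum.inr i)) = Sum.inl v)
    (h1in : ∀ e : {e : Sym2 V // e ∈ G.edgeFinset},
        (∀ v, v ∈ (e.1 : Sym2 V) → v ∈ U) →
        ∃ i : Fin (r.choose 2), M (Sum.inl e) = Sum.inr (Sum.inl i))
    (h1out : ∀ e : {e : Sym2 V // e ∈ G.edgeFinset},
        ¬ (∀ v, v ∈ (e.1 : Sym2 V) → v ∈ U) →
        ∃ i : Fin (G.edgeFinset.card - r.choose 2), M (Sum.inl e) = Sum.inr (Sum.inr i)) :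
    CliqueStableCSM V G r M := by
  constructor
  · intro a
    match a with
    | Sum.inl e =>
      constructor
      · rcases h : M (Sum.inl e) with v | (j | j)
        · show (if v ∈ (e.1 : Sym2 V) then some 1 else some 3).isSome = true
          split <;> rfl
        · rfl
        · rfl
      · rcases h : M (Sum.inl e) with v | (j | j) <;> rfl
    | Sum.inr (Sum.inl i) =>
      obtain ⟨v, hv, hMv⟩ := h2 i
      rw [hMv]; exact ⟨rfl, rfl⟩
    | Sum.inr (Sum.inr i) =>
      obtain ⟨v, hv, hMv⟩ := h3 i
      rw [hMv]; exact ⟨rfl, rfl⟩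
  · rintro ⟨a, w, hne, ⟨x, hx, hlt⟩, ⟨y, hy, hlt'⟩⟩
    -- helper: the partner of w
    have hMb : M (M.symm w) = w := M.apply_symm_apply w
    match a with
    | Sum.inr (Sum.inl i) =>
      obtain ⟨v, hv, hMv⟩ := h2 i
      rw [hMv] at hlt
      exact absurd (hlt 0 rfl) (Nat.not_lt_zero x)
    | Sum.inr (Sum.inr i) =>
      obtain ⟨v, hv, hMv⟩ := h3 i
      rw [hMv] at hlt
      exact absurd (hlt 0 rfl) (Nat.not_lt_zero x)
    | Sum.inl e =>
      by_cases hall : ∀ v, v ∈ (e.1 : Sym2 V) → v ∈ U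
      · obtain ⟨i, hMi⟩ := h1in e hall
        rw [hMi] at hlt
        have hx2 : x < 2 := hlt 2 rfl
        match w with
        | Sum.inr (Sum.inl j) =>
          rw [show cliqueManRank V G r (Sum.inl e) (Sum.inr (Sum.inl j)) = some 2 from rfl]
            at hx
          have : x = 2 := (Option.some_injective _ hx).symm
          omega
        | Sum.inr (Sum.inr j) =>
          -- woman of type 6; her partner must be a type-1 man
          rcases hb : M.symm (Sum.inr (Sum.inr j)) with e' | (i' | i')
          · rw [hb] at hlt'
            have : y = 0 := by
              have : cliqueWomRank V G r (Sum.inr (Sum.inr j)) (Sum.inl e) = some 0 := rfl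
              rw [this] at hy; exact (Option.some_injective _ hy).symm
            subst this
            exact absurd (hlt' 0 rfl) (Nat.not_lt_zero 0)
          · obtain ⟨v, hv, hMv⟩ := h2 i'
            rw [hb] at hMb; rw [hMv] at hMb; exact absurd hMb (by simp)
          · obtain ⟨v, hv, hMv⟩ := h3 i'
            rw [hb] at hMb; rw [hMv] at hMb; exact absurd hMb (by simp)
        | Sum.inl v =>
          -- w is a vertex; since x < 2, must be an endpoint of e
          by_cases hve : v ∈ (e.1 : Sym2 V)
          · have hvU : v ∈ U := hall v hve
            have hy1 : y = 1 := by
              have : cliqueWomRank V G r (Sum.inl v) (Sum.inl e) = some 1 := rfl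
              rw [this] at hy; exact (Option.some_injective _ hy).symm
            subst hy1
            rcases hb : M.symm (Sum.inl v) with e' | (i' | i')
            · rw [hb] at hlt'
              exact absurd (hlt' 1 rfl) (lt_irrefl 1)
            · rw [hb] at hlt'
              exact absurd (hlt' 0 rfl) (by omega)
            · obtain ⟨v', hv', hMv'⟩ := h3 i'
              rw [hb] at hMb; rw [hMv'] at hMb
              have : v' = v := by simpa using hMb
              exact hv' (this ▸ hvU)
          · have : cliqueManRank V G r (Sum.inl e) (Sum.inl v) = some 3 := by
              simp [cliqueManRank, hve]
            rw [this] at hx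
            have : x = 3 := (Option.some_injective _ hx).symm
            omega
      · obtain ⟨i, hMi⟩ := h1out e hall
        rw [hMi] at hlt
        exact absurd (hlt 0 rfl) (Nat.not_lt_zero x)
end

section
/- In a typed instance of SRTI, if a matching M admits a blocking pair (a,b) where a and b are of the same type i, then type i strictly prefers type i to secondworst_M(i); consequently, if type i does not strictly prefer type i to secondworst_M(i), no two agents of type i form a blocking pair. -/
/-- In a typed instance of SRTI, if a matching `M` admits a blocking
pair `(a,b)` with `a` and `b` both of type `i`, then type `i` strictly prefers type
`i` to `secondworst i` (so if `i` does not strictly prefer itself to its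
second-worst partner type, no two agents of type `i` form a blocking pair). -/
theorem typed_srti_same_type_blocking
    {Agent : Type} [Fintype Agent] [DecidableEq Agent]
    (k : ℕ) (typeOf : Agent → ℕ) (htype : ∀ a, typeOf a < k)
    (rank : ℕ → ℕ → ℕ)
    (M : Agent → Agent) (hinv : ∀ a, M (M a) = a)
    (ptype : Agent → ℕ)
    (hptype : ∀ a, ptype a = if M a = a then k else typeOf (M a))
    (haccept : ∀ a, rank (typeOf a) (ptype a) ≤ rank (typeOf a) k)
    (worst secondworst : ℕ → ℕ)
    (hsecond : ∀ i < k, (∃ a b : Agent, a ≠ b ∧ typeOf a = i ∧ typeOf b = i) →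
        ∃ a, typeOf a = i ∧ ptype a = worst i ∧
          (∃ b, b ≠ a ∧ typeOf b = i ∧ ptype b = secondworst i) ∧
          rank i (secondworst i) ≤ rank i (worst i) ∧
          ∀ c, typeOf c = i → c ≠ a → rank i (ptype c) ≤ rank i (secondworst i))
    (i : ℕ) (hi : i < k)
    (a b : Agent) (hab : a ≠ b)
    (hta : typeOf a = i) (htb : typeOf b = i)
    (hnm : M a ≠ b)
    (hBlockA : rank i (typeOf b) < rank i (ptype a))
    (hBlockB : rank i (typeOf a) < rank i (ptype b)) :
    rank i i < rank i (secondworst i) := by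
  obtain ⟨w, -, -, -, -, hle⟩ := hsecond i hi ⟨a, b, hab, hta, htb⟩
  by_cases haw : a = w
  · have hbw : b ≠ w := fun h => hab (haw.trans h.symm)
    have := hle b htb hbw
    rw [hta] at hBlockB
    exact lt_of_lt_of_le hBlockB this
  · have := hle a hta haw
    rw [htb] at hBlockA
    exact lt_of_lt_of_le hBlockA this
end

section
/- Let I be a typed instance of SMTI and let v be a type-signature: a boolean vector indexed by unordered pairs of types {i,j} (including a dummy type k+1) indicating which type-pairs occur among matched pairs (with unmatched agents counted as matched to the dummy type). For any matching M with type-signature v, an agent of type i matched to an agent of type j belongs to at least one blocking pair of M if and only if there exist types i' and j' with v_{i',j'} = 1 such that type j' strictly prefers i to i' and type i strictly prefers j' to j. Hence the number of agents involved in at least one blocking pair of M equals the sum over unordered pairs {i,j} of n_{i,j}·(b_{i,j} + b_{j,i}), where n_{i,j} is the number of matched pairs with one agent of each type and b_{i,j} is the indicator of the displayed condition. -/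
open scoped Classical

/-!
Whether an agent `x` lies in a blocking pair depends only on its type `i` and its partner's
type `j`. A blocking partner `y` witnesses the signature entry `v (ptype y) (typeOf y)`.
Conversely, an entry `v i' j'` with `j'` preferring `i` to `i'` and `i` preferring `j'` to `j` is
realised by an agent `y` of type `j'` matched to type `i'`: `j'` is not the dummy type because `i`
prefers it to its own partner's type, which is acceptable. The same preferences force `y` onto
the other side and make it differ from `M x`. Counting blocked agents is then a sum over the
type fibres `(i, j)`.
-/

theorem Finset.card_filter_eq_sum_card_fiber_mul_ite {α : Type*} [Fintype α]
    (f g : α → ℕ) (n : ℕ) (hf : ∀ x, f x < n) (hg : ∀ x, g x < n)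
    (P : α → Prop) [DecidablePred P] (Q : ℕ → ℕ → Prop) [DecidableRel Q]
    (hPQ : ∀ x, P x ↔ Q (f x) (g x)) :
    (univ.filter P).card =
      ∑ i ∈ range n, ∑ j ∈ range n,
        (univ.filter fun x => f x = i ∧ g x = j).card * if Q i j then 1 else 0 := by
  have hmaps : ∀ x ∈ univ.filter P, (f x, g x) ∈ range n ×ˢ range n :=
    fun x _ => mem_product.mpr ⟨mem_range.mpr (hf x), mem_range.mpr (hg x)⟩
  rw [card_eq_sum_card_fiberwise hmaps, sum_product]
  refine sum_congr rfl fun i _ => sum_congr rfl fun j _ => ?_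
  rw [filter_filter]
  split_ifs with hQ
  · rw [mul_one]
    congr 1
    refine filter_congr fun x _ => ?_
    simp only [Prod.mk.injEq, hPQ]
    exact ⟨fun h => h.2, fun h => ⟨h.1 ▸ h.2 ▸ hQ, h⟩⟩
  · rw [mul_zero, card_eq_zero, filter_eq_empty_iff]
    simp only [Prod.mk.injEq, not_and, hPQ]
    rintro x _ hx rfl rfl
    exact hQ hx

section TypedSMTI

def IsBlockingPartner {Agent : Type} (side : Agent → Bool) (typeOf : Agent → ℕ)
    (rank : ℕ → ℕ → ℕ) (M : Agent → Agent) (ptype : Agent → ℕ) (x y : Agent) : Prop :=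
  side y ≠ side x ∧ M x ≠ y ∧
    rank (typeOf x) (typeOf y) < rank (typeOf x) (ptype x) ∧
    rank (typeOf y) (typeOf x) < rank (typeOf y) (ptype y)

/-- The paper's condition `b_{i,j}`. -/
def TypeBlocked (v : ℕ → ℕ → Bool) (rank : ℕ → ℕ → ℕ) (i j : ℕ) : Prop :=
  ∃ i' j', v i' j' = true ∧ rank j' i < rank j' i' ∧ rank i j' < rank i j

variable {Agent : Type} {k : ℕ} {typeOf : Agent → ℕ} {M : Agent → Agent} {ptype : Agent → ℕ}

theorem ptype_lt_succ [DecidableEq Agent] (htype : ∀ a, typeOf a < k)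
    (hptype : ∀ a, ptype a = if M a = a then k else typeOf (M a)) (a : Agent) :
    ptype a < k + 1 := by
  rw [hptype]
  split
  · exact Nat.lt_succ_self k
  · exact Nat.lt_succ_of_lt (htype _)

theorem ptype_partner [DecidableEq Agent] (hinv : ∀ a, M (M a) = a)
    (hptype : ∀ a, ptype a = if M a = a then k else typeOf (M a)) {a : Agent} (ha : M a ≠ a) :
    ptype (M a) = typeOf a := by
  rw [hptype, hinv a, if_neg (Ne.symm ha)]

theorem exists_typeOf_ptype_of_signature [DecidableEq Agent] (hinv : ∀ a, M (M a) = a)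
    (hptype : ∀ a, ptype a = if M a = a then k else typeOf (M a)) {v : ℕ → ℕ → Bool}
    (hv : ∀ i j, v i j = true ↔
        ∃ a : Agent, (typeOf a = i ∧ ptype a = j) ∨ (typeOf a = j ∧ ptype a = i))
    {i j : ℕ} (hvij : v i j = true) (hj : j ≠ k) :
    ∃ y, typeOf y = j ∧ ptype y = i := by
  obtain ⟨a, ⟨hta, hpa⟩ | hja⟩ := (hv i j).mp hvij
  · have hMa : M a ≠ a := fun h => hj (by rw [← hpa, hptype, if_pos h])
    rw [hptype, if_neg hMa] at hpa
    exact ⟨M a, hpa, hta ▸ ptype_partner hinv hptype hMa⟩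
  · exact ⟨a, hja⟩

theorem typeBlocked_of_isBlockingPartner {side : Agent → Bool} {rank : ℕ → ℕ → ℕ}
    {v : ℕ → ℕ → Bool}
    (hv : ∀ i j, v i j = true ↔
        ∃ a : Agent, (typeOf a = i ∧ ptype a = j) ∨ (typeOf a = j ∧ ptype a = i))
    {x y : Agent} (hxy : IsBlockingPartner side typeOf rank M ptype x y) :
    TypeBlocked v rank (typeOf x) (ptype x) :=
  ⟨ptype y, typeOf y, (hv _ _).mpr ⟨y, Or.inr ⟨rfl, rfl⟩⟩, hxy.2.2.2, hxy.2.2.1⟩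

theorem exists_isBlockingPartner_of_typeBlocked [DecidableEq Agent]
    {side : Agent → Bool} {sideT : ℕ → Bool}
    {rank : ℕ → ℕ → ℕ} {v : ℕ → ℕ → Bool}
    (htype : ∀ a, typeOf a < k) (hside : ∀ a, sideT (typeOf a) = side a)
    (hopp : ∀ i j, i < k → j < k → sideT i = sideT j → rank i k < rank i j)
    (hinv : ∀ a, M (M a) = a)
    (hptype : ∀ a, ptype a = if M a = a then k else typeOf (M a))
    (haccept : ∀ a, rank (typeOf a) (ptype a) ≤ rank (typeOf a) k)
    (hv : ∀ i j, v i j = true ↔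
        ∃ a : Agent, (typeOf a = i ∧ ptype a = j) ∨ (typeOf a = j ∧ ptype a = i))
    {x : Agent} (hx : TypeBlocked v rank (typeOf x) (ptype x)) :
    ∃ y, IsBlockingPartner side typeOf rank M ptype x y := by
  obtain ⟨i', j', hvij, hj'x, hxj'⟩ := hx
  have hj' : j' ≠ k := by
    rintro rfl
    exact absurd (haccept x) (Nat.not_le_of_lt hxj')
  obtain ⟨y, rfl, rfl⟩ := exists_typeOf_ptype_of_signature hinv hptype hv hvij hj'
  have hsides : side y ≠ side x := by
    rw [← hside, ← hside]
    intro h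
    exact absurd (haccept y)
      (Nat.not_le_of_lt (lt_trans (hopp _ _ (htype y) (htype x) h) hj'x))
  refine ⟨y, hsides, fun hMx => ?_, hxj', hj'x⟩
  have hxy : M x ≠ x := fun h => hsides (by rw [← h, hMx])
  rw [hptype, if_neg hxy, hMx] at hxj'
  exact lt_irrefl _ hxj'

end TypedSMTI

theorem typed_smti_type_signature_blocking_general
    {Agent : Type} [Fintype Agent] [DecidableEq Agent]
    (k : ℕ) (typeOf : Agent → ℕ) (htype : ∀ a, typeOf a < k)
    (side : Agent → Bool) (sideT : ℕ → Bool)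
    (hside : ∀ a, sideT (typeOf a) = side a)
    (rank : ℕ → ℕ → ℕ)
    -- types on the same side are mutually unacceptable (ranked after the dummy)
    (hopp : ∀ i j, i < k → j < k → sideT i = sideT j → rank i k < rank i j)
    (M : Agent → Agent) (hinv : ∀ a, M (M a) = a)
    (ptype : Agent → ℕ)
    (hptype : ∀ a, ptype a = if M a = a then k else typeOf (M a))
    (haccept : ∀ a, rank (typeOf a) (ptype a) ≤ rank (typeOf a) k)
    (v : ℕ → ℕ → Bool)
    (hv : ∀ i j, v i j = true ↔
        ∃ a : Agent, (typeOf a = i ∧ ptype a = j) ∨ (typeOf a = j ∧ ptype a = i)) :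
    (∀ x : Agent,
      (∃ y : Agent, side y ≠ side x ∧ M x ≠ y ∧
          rank (typeOf x) (typeOf y) < rank (typeOf x) (ptype x) ∧
          rank (typeOf y) (typeOf x) < rank (typeOf y) (ptype y)) ↔
      (∃ i' j', v i' j' = true ∧
          rank j' (typeOf x) < rank j' i' ∧
          rank (typeOf x) j' < rank (typeOf x) (ptype x))) ∧
    (Finset.univ.filter fun x : Agent => ∃ y : Agent, side y ≠ side x ∧ M x ≠ y ∧
          rank (typeOf x) (typeOf y) < rank (typeOf x) (ptype x) ∧
          rank (typeOf y) (typeOf x) < rank (typeOf y) (ptype y)).card =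
      ∑ i ∈ Finset.range (k + 1), ∑ j ∈ Finset.range (k + 1),
        (Finset.univ.filter fun x : Agent => typeOf x = i ∧ ptype x = j).card *
          (if ∃ i' j', v i' j' = true ∧ rank j' i < rank j' i' ∧ rank i j' < rank i j
            then 1 else 0) := by
  have blocked_iff : ∀ x, (∃ y, IsBlockingPartner side typeOf rank M ptype x y) ↔
      TypeBlocked v rank (typeOf x) (ptype x) := fun x =>
    ⟨fun ⟨_, hxy⟩ => typeBlocked_of_isBlockingPartner hv hxy,
      exists_isBlockingPartner_of_typeBlocked htype hside hopp hinv hptype haccept hv⟩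
  exact ⟨blocked_iff, Finset.card_filter_eq_sum_card_fiber_mul_ite typeOf ptype (k + 1)
    (fun x => Nat.lt_succ_of_lt (htype x)) (ptype_lt_succ htype hptype) _ (TypeBlocked v rank)
    blocked_iff⟩

/-- In a typed instance of SMTI with type-signature `v` (with
`v i j = true` iff some matched pair consists of an agent of type `i` and an agent
of type `j`, unmatched agents counting as matched to the dummy type `k`):
(a) an agent `x` of type `i` matched to type `j = ptype x` belongs to a blocking
pair iff there are types `i', j'` with `v i' j' = true`, `j'` strictly preferring
`i` to `i'`, and `i` strictly preferring `j'` to `j`; and (b) the number of agents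
in at least one blocking pair equals the displayed sum of `n_{i,j} · b_{i,j}`. -/
theorem typed_smti_type_signature_blocking
    {Agent : Type} [Fintype Agent] [DecidableEq Agent]
    (k : ℕ) (typeOf : Agent → ℕ) (htype : ∀ a, typeOf a < k)
    (side : Agent → Bool) (sideT : ℕ → Bool)
    (hside : ∀ a, sideT (typeOf a) = side a)
    (rank : ℕ → ℕ → ℕ)
    -- types on the same side are mutually unacceptable (ranked after the dummy)
    (hopp : ∀ i j, i < k → j < k → sideT i = sideT j → rank i k < rank i j)
    (M : Agent → Agent) (hinv : ∀ a, M (M a) = a)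
    (hbip : ∀ a, M a ≠ a → side (M a) ≠ side a)
    (ptype : Agent → ℕ)
    (hptype : ∀ a, ptype a = if M a = a then k else typeOf (M a))
    (haccept : ∀ a, rank (typeOf a) (ptype a) ≤ rank (typeOf a) k)
    (v : ℕ → ℕ → Bool)
    (hv : ∀ i j, v i j = true ↔
        ∃ a : Agent, (typeOf a = i ∧ ptype a = j) ∨ (typeOf a = j ∧ ptype a = i)) :
    (∀ x : Agent,
      (∃ y : Agent, side y ≠ side x ∧ M x ≠ y ∧
          rank (typeOf x) (typeOf y) < rank (typeOf x) (ptype x) ∧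
          rank (typeOf y) (typeOf x) < rank (typeOf y) (ptype y)) ↔
      (∃ i' j', v i' j' = true ∧
          rank j' (typeOf x) < rank j' i' ∧
          rank (typeOf x) j' < rank (typeOf x) (ptype x))) ∧
    (Finset.univ.filter fun x : Agent => ∃ y : Agent, side y ≠ side x ∧ M x ≠ y ∧
          rank (typeOf x) (typeOf y) < rank (typeOf x) (ptype x) ∧
          rank (typeOf y) (typeOf x) < rank (typeOf y) (ptype y)).card =
      ∑ i ∈ Finset.range (k + 1), ∑ j ∈ Finset.range (k + 1),
        (Finset.univ.filter fun x : Agent => typeOf x = i ∧ ptype x = j).card *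
          (if ∃ i' j', v i' j' = true ∧ rank j' i < rank j' i' ∧ rank i j' < rank i j
            then 1 else 0) :=
  typed_smti_type_signature_blocking_general k typeOf htype side sideT hside rank hopp M hinv ptype
    hptype haccept v hv
end
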